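/- arXiv:math/0609715 — 3 statements merged into one kernel-verified Lean document; each statement's English description precedes it below -/
import Mathlib

section
/- Let H be a Hopf π-coalgebra, (C, σ) a Hopf π-subcoalgebra with left section g, and B_α = { h ∈ H_α : L_{1,α}(h) = 1 ⊗ h } the embeddable homogeneous space. Then for each α ∈ π the linear map A_α : C_α ⊗ B_α → H_α, A_α(c ⊗ b) = g_α(c)·b, is a linear isomorphism with inverse A_α⁻¹ = (σ_α ⊗ μ_α(g_α⁻¹ σ_{α⁻¹} ⊗ I_α))(Δ^H_{α,α⁻¹} ⊗ I_α)Δ^H_{1,α}. Hence H_α ≅ C_α ⊗ B_α as vector spaces. -/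
open TensorProduct LinearMap

/-- The data and axioms of a `π`-coalgebra over `K`: a family of `K`-vector spaces
`C α` indexed by a group `π`, with comultiplications
`Δ_{α,β} : C_{αβ} → C α ⊗ C β` and a counit `ε : C 1 → K`, satisfying
coassociativity and counitality.  (To avoid dependent-type issues, the
comultiplication takes an index `γ` together with a proof `α * β = γ`.) -/
structure PiCoalg (K : Type*) [Field K] (π : Type*) [Group π]
    (C : π → Type*) [∀ α, AddCommGroup (C α)] [∀ α, Module K (C α)] where
  comul : ∀ (α β : π) {γ : π}, α * β = γ → (C γ →ₗ[K] C α ⊗[K] C β)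
  counit : C 1 →ₗ[K] K
  coassoc : ∀ (α β γ δ : π) (h : α * β * γ = δ) (h' : α * (β * γ) = δ),
    (TensorProduct.assoc K (C α) (C β) (C γ)).toLinearMap ∘ₗ
        (TensorProduct.map (comul α β rfl) LinearMap.id) ∘ₗ comul (α * β) γ h
      = (TensorProduct.map LinearMap.id (comul β γ rfl)) ∘ₗ comul α (β * γ) h'
  counit_comul : ∀ (α : π),
    (TensorProduct.lid K (C α)).toLinearMap ∘ₗ
        (TensorProduct.map counit LinearMap.id) ∘ₗ comul 1 α (one_mul α)
      = LinearMap.id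
  comul_counit : ∀ (α : π),
    (TensorProduct.rid K (C α)).toLinearMap ∘ₗ
        (TensorProduct.map LinearMap.id counit) ∘ₗ comul α 1 (mul_one α)
      = LinearMap.id

/-- A Hopf `π`-coalgebra: a `π`-coalgebra whose components are `K`-algebras,
whose comultiplications and counit are algebra maps, together with an antipode
family `S_α : H α → H α⁻¹` satisfying the antipode axioms. -/
structure HopfPiCoalg (K : Type*) [Field K] (π : Type*) [Group π]
    (H : π → Type*) [∀ α, Ring (H α)] [∀ α, Algebra K (H α)]
    extends PiCoalg K π H where
  comul_mul : ∀ (α β γ : π) (h : α * β = γ) (x y : H γ),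
    comul α β h (x * y) = comul α β h x * comul α β h y
  comul_one : ∀ (α β γ : π) (h : α * β = γ), comul α β h (1 : H γ) = 1
  counit_mul : ∀ (x y : H 1), counit (x * y) = counit x * counit y
  counit_one : counit (1 : H 1) = 1
  antipode : ∀ (α β : π), α⁻¹ = β → (H α →ₗ[K] H β)
  antipode_left : ∀ (α : π),
    (LinearMap.mul' K (H α)) ∘ₗ
        (TensorProduct.map (antipode α⁻¹ α (inv_inv α)) LinearMap.id) ∘ₗ
          comul α⁻¹ α (inv_mul_cancel α)
      = (Algebra.linearMap K (H α)) ∘ₗ counit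
  antipode_right : ∀ (α : π),
    (LinearMap.mul' K (H α)) ∘ₗ
        (TensorProduct.map LinearMap.id (antipode α⁻¹ α (inv_inv α))) ∘ₗ
          comul α α⁻¹ (mul_inv_cancel α)
      = (Algebra.linearMap K (H α)) ∘ₗ counit

/-- A Hopf `π`-subcoalgebra `(C, σ)` of a Hopf `π`-coalgebra `H`: a Hopf
`π`-coalgebra `C` together with a family of surjective algebra epimorphisms
`σ_α : H α → C α` commuting with comultiplication, counit and antipode. -/
structure HopfPiSub (K : Type*) [Field K] (π : Type*) [Group π]
    (H : π → Type*) [∀ α, Ring (H α)] [∀ α, Algebra K (H α)]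
    (C : π → Type*) [∀ α, Ring (C α)] [∀ α, Algebra K (C α)]
    (hH : HopfPiCoalg K π H) (hC : HopfPiCoalg K π C) where
  σ : ∀ α, H α →ₗ[K] C α
  σ_surj : ∀ α, Function.Surjective (σ α)
  σ_mul : ∀ (α : π) (x y : H α), σ α (x * y) = σ α x * σ α y
  σ_one : ∀ (α : π), σ α (1 : H α) = 1
  σ_comul : ∀ (α β γ : π) (h : α * β = γ),
    (hC.comul α β h) ∘ₗ σ γ = (TensorProduct.map (σ α) (σ β)) ∘ₗ hH.comul α β h
  σ_counit : hC.counit ∘ₗ σ 1 = hH.counit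
  σ_antipode : ∀ (α β : π) (h : α⁻¹ = β),
    (hC.antipode α β h) ∘ₗ σ α = (σ β) ∘ₗ hH.antipode α β h

/-- A left `π`-coisotropic quantum subgroup `(C, σ)` of a Hopf `π`-coalgebra `H`:
a `π`-coalgebra `C` whose components are left `H α`-modules (the action being
recorded as a linear map `ω_α : H α ⊗ C α → C α`), together with surjective
left-module maps `σ_α : H α → C α` intertwining comultiplication and counit. -/
structure Coisotropic (K : Type*) [Field K] (π : Type*) [Group π]
    (H : π → Type*) [∀ α, Ring (H α)] [∀ α, Algebra K (H α)]
    (C : π → Type*) [∀ α, AddCommGroup (C α)] [∀ α, Module K (C α)]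
    (hH : HopfPiCoalg K π H) (hC : PiCoalg K π C) where
  ω : ∀ α, H α ⊗[K] C α →ₗ[K] C α
  ω_assoc : ∀ (α : π) (h k : H α) (c : C α),
    ω α ((h * k) ⊗ₜ[K] c) = ω α (h ⊗ₜ[K] ω α (k ⊗ₜ[K] c))
  ω_one : ∀ (α : π) (c : C α), ω α ((1 : H α) ⊗ₜ[K] c) = c
  σ : ∀ α, H α →ₗ[K] C α
  σ_surj : ∀ α, Function.Surjective (σ α)
  σ_mod : ∀ (α : π) (h k : H α), σ α (h * k) = ω α (h ⊗ₜ[K] σ α k)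
  σ_comul : ∀ (α β γ : π) (h : α * β = γ),
    (hC.comul α β h) ∘ₗ σ γ = (TensorProduct.map (σ α) (σ β)) ∘ₗ hH.comul α β h
  σ_counit : hC.counit ∘ₗ σ 1 = hH.counit

/-- A right `π`-comodule `M` over a `π`-coalgebra `C`, with coactions
`θ_{α,β} : M_{αβ} → M α ⊗ C β` satisfying coassociativity and counitality. -/
structure PiComodule (K : Type*) [Field K] (π : Type*) [Group π]
    (C : π → Type*) [∀ α, AddCommGroup (C α)] [∀ α, Module K (C α)]
    (M : π → Type*) [∀ α, AddCommGroup (M α)] [∀ α, Module K (M α)]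
    (hC : PiCoalg K π C) where
  coact : ∀ (α β : π) {γ : π}, α * β = γ → (M γ →ₗ[K] M α ⊗[K] C β)
  coassoc : ∀ (α β γ δ : π) (h : α * β * γ = δ) (h' : α * (β * γ) = δ),
    (TensorProduct.assoc K (M α) (C β) (C γ)).toLinearMap ∘ₗ
        (TensorProduct.map (coact α β rfl) LinearMap.id) ∘ₗ coact (α * β) γ h
      = (TensorProduct.map LinearMap.id (hC.comul β γ rfl)) ∘ₗ coact α (β * γ) h'
  coact_counit : ∀ (α : π),
    (TensorProduct.rid K (M α)).toLinearMap ∘ₗ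
        (TensorProduct.map LinearMap.id hC.counit) ∘ₗ coact α 1 (mul_one α)
      = LinearMap.id

/-- A left section `g` of a Hopf `π`-subcoalgebra `(C, σ)`: a family of linear
maps `g_α : C α → H α` with convolution inverse `g⁻¹ = {g_α⁻¹ : C_{α⁻¹} → H α}`,
such that `g_α(1) = 1` and `L_{1,α} ∘ g_α = (I ⊗ g_α) ∘ Δ^C_{1,α}`. -/
structure PiSection (K : Type*) [Field K] (π : Type*) [Group π]
    (H : π → Type*) [∀ α, Ring (H α)] [∀ α, Algebra K (H α)]
    (C : π → Type*) [∀ α, Ring (C α)] [∀ α, Algebra K (C α)]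
    (hH : HopfPiCoalg K π H) (hC : HopfPiCoalg K π C)
    (S : HopfPiSub K π H C hH hC) where
  g : ∀ α, C α →ₗ[K] H α
  ginv : ∀ (α β : π), β = α⁻¹ → (C β →ₗ[K] H α)
  g_one : ∀ α, g α (1 : C α) = 1
  g_sec : ∀ α,
    ((TensorProduct.map (S.σ 1) LinearMap.id) ∘ₗ hH.comul 1 α (one_mul α)) ∘ₗ g α
      = (TensorProduct.map LinearMap.id (g α)) ∘ₗ hC.comul 1 α (one_mul α)
  conv_right : ∀ α,
    (LinearMap.mul' K (H α)) ∘ₗ (TensorProduct.map (g α) (ginv α α⁻¹ rfl)) ∘ₗ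
        hC.comul α α⁻¹ (mul_inv_cancel α)
      = (Algebra.linearMap K (H α)) ∘ₗ hC.counit
  conv_left : ∀ α,
    (LinearMap.mul' K (H α)) ∘ₗ (TensorProduct.map (ginv α α⁻¹ rfl) (g α)) ∘ₗ
        hC.comul α⁻¹ α (inv_mul_cancel α)
      = (Algebra.linearMap K (H α)) ∘ₗ hC.counit

/-- The subspace `B = {h : L(h) = u ⊗ h}` (for `u = 1` this is the `π`-quantum
right embeddable homogeneous space). -/
noncomputable def Bsub (K : Type*) [Field K] {C1 Hα : Type*}
    [AddCommGroup C1] [Module K C1] [AddCommGroup Hα] [Module K Hα]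
    (L1 : Hα →ₗ[K] C1 ⊗[K] Hα) (u : C1) : Submodule K Hα :=
  LinearMap.ker (L1 - (TensorProduct.mk K C1 Hα) u)

/-- The induced representation space
`Ind(ρ)_α = { x ∈ V₁ ⊗ H_α : (I ⊗ L_{1,α}) x = (ρ_{1,1} ⊗ I) x }`
(the right-hand side being reassociated canonically). -/
noncomputable def IndSub (K : Type*) [Field K] {V1 C1 Hα : Type*}
    [AddCommGroup V1] [Module K V1] [AddCommGroup C1] [Module K C1]
    [AddCommGroup Hα] [Module K Hα]
    (L1 : Hα →ₗ[K] C1 ⊗[K] Hα) (ρ11 : V1 →ₗ[K] V1 ⊗[K] C1) :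
    Submodule K (V1 ⊗[K] Hα) :=
  LinearMap.ker ((TensorProduct.map LinearMap.id L1) -
    (TensorProduct.assoc K V1 C1 Hα).toLinearMap ∘ₗ
      (TensorProduct.map ρ11 LinearMap.id))


set_option maxHeartbeats 1000000
set_option synthInstance.maxHeartbeats 200000

section AuxLemmas
variable {K : Type*} [Field K]

-- generalized coassociativity for `PiCoalg`, with arbitrary proofs of index equations
lemma PiCoalg.coassoc' {π : Type*} [Group π]
    {C : π → Type*} [∀ α, AddCommGroup (C α)] [∀ α, Module K (C α)]
    (P : PiCoalg K π C) (α β γ : π) {e₁ e₂ δ : π}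
    (h1 : α * β = e₁) (h2 : β * γ = e₂) (h : e₁ * γ = δ) (h' : α * e₂ = δ) :
    (TensorProduct.assoc K (C α) (C β) (C γ)).toLinearMap ∘ₗ
        (TensorProduct.map (P.comul α β h1) LinearMap.id) ∘ₗ P.comul e₁ γ h
      = (TensorProduct.map LinearMap.id (P.comul β γ h2)) ∘ₗ P.comul α e₂ h' := by
  subst h1; subst h2
  exact P.coassoc α β γ δ h h'

variable {M N P M' N' P' M'' N'' : Type*}
  [AddCommGroup M] [Module K M] [AddCommGroup N] [Module K N]
  [AddCommGroup P] [Module K P] [AddCommGroup M'] [Module K M']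
  [AddCommGroup N'] [Module K N'] [AddCommGroup P'] [Module K P']
  [AddCommGroup M''] [Module K M''] [AddCommGroup N''] [Module K N'']

lemma aux_mm_gen (f2 : M' →ₗ[K] M'') (f1 : M →ₗ[K] M') (j2 : N' →ₗ[K] N'') (j1 : N →ₗ[K] N')
    (v : M ⊗[K] N) :
    TensorProduct.map f2 j2 (TensorProduct.map f1 j1 v)
      = TensorProduct.map (f2 ∘ₗ f1) (j2 ∘ₗ j1) v := by
  rw [TensorProduct.map_comp]; rfl

lemma aux_ms1 (f2 : M' →ₗ[K] M'') (f1 : M →ₗ[K] M') (j : N →ₗ[K] N') (v : M ⊗[K] N) :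
    TensorProduct.map (f2 ∘ₗ f1) j v
      = TensorProduct.map f2 LinearMap.id (TensorProduct.map f1 j v) := by
  rw [aux_mm_gen, LinearMap.id_comp]

lemma aux_ms2 (f : M →ₗ[K] M') (j2 : N' →ₗ[K] N'') (j1 : N →ₗ[K] N') (v : M ⊗[K] N) :
    TensorProduct.map f (j2 ∘ₗ j1) v
      = TensorProduct.map LinearMap.id j2 (TensorProduct.map f j1 v) := by
  rw [aux_mm_gen, LinearMap.id_comp]

lemma aux_mm1 (f2 : M' →ₗ[K] M'') (f1 : M →ₗ[K] M') (v : M ⊗[K] N) :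
    TensorProduct.map f2 LinearMap.id (TensorProduct.map f1 LinearMap.id v)
      = TensorProduct.map (f2 ∘ₗ f1) LinearMap.id v := by
  rw [aux_mm_gen, LinearMap.id_comp]

lemma aux_mm2 (j2 : N' →ₗ[K] N'') (j1 : N →ₗ[K] N') (v : M ⊗[K] N) :
    TensorProduct.map LinearMap.id j2 (TensorProduct.map LinearMap.id j1 v)
      = TensorProduct.map LinearMap.id (j2 ∘ₗ j1) v := by
  rw [aux_mm_gen, LinearMap.comp_id]

lemma aux_sw (f : M →ₗ[K] M') (j : N →ₗ[K] N') (v : M ⊗[K] N) :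
    TensorProduct.map f j v
      = TensorProduct.map f LinearMap.id (TensorProduct.map LinearMap.id j v) := by
  rw [aux_mm_gen, LinearMap.comp_id, LinearMap.id_comp]

lemma aux_sw' (f : M →ₗ[K] M') (j : N →ₗ[K] N') (v : M ⊗[K] N) :
    TensorProduct.map f j v
      = TensorProduct.map LinearMap.id j (TensorProduct.map f LinearMap.id v) := by
  rw [aux_mm_gen, LinearMap.comp_id, LinearMap.id_comp]

lemma aux_nat1 (f : M →ₗ[K] M') (v : (M ⊗[K] N) ⊗[K] P) :
    TensorProduct.map f LinearMap.id ((TensorProduct.assoc K M N P) v)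
      = (TensorProduct.assoc K M' N P)
          (TensorProduct.map (TensorProduct.map f LinearMap.id) LinearMap.id v) := by
  induction v using TensorProduct.induction_on with
  | zero => simp
  | tmul u c =>
    induction u using TensorProduct.induction_on with
    | zero => simp
    | tmul a b => simp
    | add u1 u2 h1 h2 => simp only [TensorProduct.add_tmul, map_add, h1, h2]
  | add v1 v2 h1 h2 => simp only [map_add, h1, h2]

lemma aux_nat2 (g : N →ₗ[K] N') (v : (M ⊗[K] N) ⊗[K] P) :
    TensorProduct.map LinearMap.id (TensorProduct.map g LinearMap.id)
        ((TensorProduct.assoc K M N P) v)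
      = (TensorProduct.assoc K M N' P)
          (TensorProduct.map (TensorProduct.map LinearMap.id g) LinearMap.id v) := by
  induction v using TensorProduct.induction_on with
  | zero => simp
  | tmul u c =>
    induction u using TensorProduct.induction_on with
    | zero => simp
    | tmul a b => simp
    | add u1 u2 h1 h2 => simp only [TensorProduct.add_tmul, map_add, h1, h2]
  | add v1 v2 h1 h2 => simp only [map_add, h1, h2]

lemma aux_nat3 (h : P →ₗ[K] P') (v : (M ⊗[K] N) ⊗[K] P) :
    TensorProduct.map LinearMap.id (TensorProduct.map LinearMap.id h)
        ((TensorProduct.assoc K M N P) v)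
      = (TensorProduct.assoc K M N P')
          (TensorProduct.map LinearMap.id h v) := by
  induction v using TensorProduct.induction_on with
  | zero => simp
  | tmul u c =>
    induction u using TensorProduct.induction_on with
    | zero => simp
    | tmul a b => simp
    | add u1 u2 h1 h2 => simp only [TensorProduct.add_tmul, map_add, h1, h2]
  | add v1 v2 h1 h2 => simp only [map_add, h1, h2]


lemma aux_nat3s (h : P →ₗ[K] P') (v : M ⊗[K] (N ⊗[K] P)) :
    TensorProduct.map LinearMap.id h ((TensorProduct.assoc K M N P).symm v)
      = (TensorProduct.assoc K M N P').symm
          (TensorProduct.map LinearMap.id (TensorProduct.map LinearMap.id h) v) := by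
  rw [LinearEquiv.eq_symm_apply, ← aux_nat3, LinearEquiv.apply_symm_apply]

lemma aux_mulassoc {A : Type*} [Ring A] [Algebra K A]
    (f : M →ₗ[K] A) (h : N →ₗ[K] A) (j : P →ₗ[K] A) :
    LinearMap.mul' K A ∘ₗ TensorProduct.map f (LinearMap.mul' K A ∘ₗ TensorProduct.map h j) ∘ₗ
        (TensorProduct.assoc K M N P).toLinearMap
      = LinearMap.mul' K A ∘ₗ TensorProduct.map (LinearMap.mul' K A ∘ₗ TensorProduct.map f h) j := by
  apply TensorProduct.ext
  apply TensorProduct.ext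
  ext x y z
  simp [LinearMap.mul'_apply, mul_assoc]

lemma aux_mul3 {A : Type*} [Ring A] [Algebra K A] (w : (A ⊗[K] A) ⊗[K] A) :
    LinearMap.mul' K A (TensorProduct.map (LinearMap.mul' K A) LinearMap.id w)
      = LinearMap.mul' K A (TensorProduct.map LinearMap.id (LinearMap.mul' K A)
          ((TensorProduct.assoc K A A A) w)) := by
  induction w using TensorProduct.induction_on with
  | zero => simp
  | tmul u c =>
    induction u using TensorProduct.induction_on with
    | zero => simp
    | tmul a b => simp [LinearMap.mul'_apply, mul_assoc]
    | add u1 u2 h1 h2 => simp only [TensorProduct.add_tmul, map_add, h1, h2]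
  | add v1 v2 h1 h2 => simp only [map_add, h1, h2]

lemma aux_eta {A : Type*} [Ring A] [Algebra K A] :
    LinearMap.mul' K A ∘ₗ TensorProduct.map (Algebra.linearMap K A) LinearMap.id
      = (TensorProduct.lid K A).toLinearMap := by
  ext a
  simp [LinearMap.mul'_apply, Algebra.smul_def]

lemma aux_lidnat (F : M →ₗ[K] N) (w : K ⊗[K] M) :
    (TensorProduct.lid K N) (TensorProduct.map LinearMap.id F w)
      = F ((TensorProduct.lid K M) w) := by
  induction w using TensorProduct.induction_on with
  | zero => simp
  | tmul k m => simp
  | add w1 w2 h1 h2 => simp only [map_add, h1, h2]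

lemma aux_G3 {A B : Type*} [Ring A] [Algebra K A] [Ring B] [Algebra K B] :
    LinearMap.mul' K (A ⊗[K] B) ∘ₗ TensorProduct.map LinearMap.id ((TensorProduct.mk K A B) 1)
      = TensorProduct.map LinearMap.id (LinearMap.mul' K B) ∘ₗ
          (TensorProduct.assoc K A B B).toLinearMap := by
  apply TensorProduct.ext
  ext a b b'
  simp [LinearMap.mul'_apply, Algebra.TensorProduct.tmul_mul_tmul]

lemma aux_mulright {A : Type*} [Ring A] [Algebra K A]
    (f : M →ₗ[K] A) (j : N →ₗ[K] A) (h : A) (v : M ⊗[K] N) :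
    LinearMap.mul' K A (TensorProduct.map f (LinearMap.mulRight K h ∘ₗ j) v)
      = LinearMap.mulRight K h (LinearMap.mul' K A (TensorProduct.map f j v)) := by
  induction v using TensorProduct.induction_on with
  | zero => simp
  | tmul x y => simp [LinearMap.mul'_apply, mul_assoc]
  | add v1 v2 h1 h2 => simp only [map_add, h1, h2]

lemma aux_L5a {A B : Type*} [Ring A] [Algebra K A] [Ring B] [Algebra K B]
    (g : M →ₗ[K] B) (h : B) (u : A ⊗[K] M) :
    (TensorProduct.map LinearMap.id g u) * ((1 : A) ⊗ₜ[K] h)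
      = TensorProduct.map LinearMap.id (LinearMap.mulRight K h ∘ₗ g) u := by
  induction u using TensorProduct.induction_on with
  | zero => simp
  | tmul a m => simp [Algebra.TensorProduct.tmul_mul_tmul]
  | add u1 u2 h1 h2 => simp only [map_add, add_mul, h1, h2]

lemma aux_L7 {A : Type*} [Ring A] [Algebra K A] (e : N →ₗ[K] K) (h : A) (w : M ⊗[K] N) :
    TensorProduct.map LinearMap.id (LinearMap.mulRight K h ∘ₗ Algebra.linearMap K A ∘ₗ e) w
      = ((TensorProduct.rid K M) (TensorProduct.map LinearMap.id e w)) ⊗ₜ[K] h := by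
  induction w using TensorProduct.induction_on with
  | zero => simp
  | tmul x z =>
    simp only [TensorProduct.map_tmul, LinearMap.id_coe, id_eq, LinearMap.comp_apply,
      Algebra.linearMap_apply, LinearMap.mulRight_apply, TensorProduct.rid_tmul]
    rw [← Algebra.smul_def, TensorProduct.smul_tmul]
  | add w1 w2 h1 h2 => simp only [map_add, h1, h2, TensorProduct.add_tmul]

lemma aux_map_mul {A A' B : Type*} [Ring A] [Algebra K A] [Ring A'] [Algebra K A']
    [Ring B] [Algebra K B] (f : A →ₗ[K] A') (hf : ∀ x y, f (x * y) = f x * f y)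
    (u v : A ⊗[K] B) :
    TensorProduct.map f LinearMap.id (u * v)
      = TensorProduct.map f LinearMap.id u * TensorProduct.map f LinearMap.id v := by
  induction u using TensorProduct.induction_on with
  | zero => simp
  | tmul a b =>
    induction v using TensorProduct.induction_on with
    | zero => simp
    | tmul a' b' => simp [Algebra.TensorProduct.tmul_mul_tmul, hf]
    | add u1 u2 h1 h2 => simp only [mul_add, map_add, h1, h2]
  | add u1 u2 h1 h2 => simp only [add_mul, map_add, h1, h2]

lemma aux_Lhom {A R' : Type*} [Ring A] [Algebra K A] [Ring R'] [Algebra K R']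
    (Lm : A →ₗ[K] R') (hmul : ∀ x y, Lm (x * y) = Lm x * Lm y)
    (f : M →ₗ[K] A) (j : N →ₗ[K] A) (w : M ⊗[K] N) :
    LinearMap.mul' K R' (TensorProduct.map (Lm ∘ₗ f) (Lm ∘ₗ j) w)
      = Lm (LinearMap.mul' K A (TensorProduct.map f j w)) := by
  induction w using TensorProduct.induction_on with
  | zero => simp
  | tmul x y => simp [LinearMap.mul'_apply, hmul]
  | add w1 w2 h1 h2 => simp only [map_add, h1, h2]

end AuxLemmas
/-- For a Hopf `π`-subcoalgebra `(C, σ)` of `H` with left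
section `g`, the map `A_α : C_α ⊗ B_α → H_α`, `c ⊗ b ↦ g_α(c)·b`, is a linear
isomorphism, with inverse given by
`A_α⁻¹ = (σ_α ⊗ μ_α(g_α⁻¹ σ_{α⁻¹} ⊗ I))(Δ^H_{α,α⁻¹} ⊗ I)Δ^H_{1,α}`.
Hence `H_α ≅ C_α ⊗ B_α` as vector spaces. -/
theorem H_iso_C_tensor_B
    (K : Type*) [Field K] (π : Type*) [Group π]
    (H : π → Type*) [∀ α, Ring (H α)] [∀ α, Algebra K (H α)]
    (C : π → Type*) [∀ α, Ring (C α)] [∀ α, Algebra K (C α)]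
    (hH : HopfPiCoalg K π H) (hC : HopfPiCoalg K π C)
    (S : HopfPiSub K π H C hH hC)
    (G : PiSection K π H C hH hC S) :
    ∀ (α : π),
      Function.Bijective ((LinearMap.mul' K (H α)) ∘ₗ
        (TensorProduct.map (G.g α)
          (Bsub K ((TensorProduct.map (S.σ 1) LinearMap.id) ∘ₗ
            hH.comul 1 α (one_mul α)) (1 : C 1)).subtype)) ∧
      -- the stated formula is a two-sided inverse:
      (∀ x : C α ⊗[K] (Bsub K ((TensorProduct.map (S.σ 1) LinearMap.id) ∘ₗ
            hH.comul 1 α (one_mul α)) (1 : C 1)),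
        ((TensorProduct.map (S.σ α)
            ((LinearMap.mul' K (H α)) ∘ₗ
              (TensorProduct.map ((G.ginv α α⁻¹ rfl) ∘ₗ S.σ α⁻¹) LinearMap.id))) ∘ₗ
          (TensorProduct.assoc K (H α) (H α⁻¹) (H α)).toLinearMap ∘ₗ
          (TensorProduct.map (hH.comul α α⁻¹ (mul_inv_cancel α)) LinearMap.id) ∘ₗ
          hH.comul 1 α (one_mul α))
          (((LinearMap.mul' K (H α)) ∘ₗ
            (TensorProduct.map (G.g α)
              (Bsub K ((TensorProduct.map (S.σ 1) LinearMap.id) ∘ₗ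
                hH.comul 1 α (one_mul α)) (1 : C 1)).subtype)) x)
        = (TensorProduct.map LinearMap.id
            (Bsub K ((TensorProduct.map (S.σ 1) LinearMap.id) ∘ₗ
              hH.comul 1 α (one_mul α)) (1 : C 1)).subtype) x) ∧
      (∀ y : H α,
        ((LinearMap.mul' K (H α)) ∘ₗ (TensorProduct.map (G.g α) LinearMap.id))
          (((TensorProduct.map (S.σ α)
              ((LinearMap.mul' K (H α)) ∘ₗ
                (TensorProduct.map ((G.ginv α α⁻¹ rfl) ∘ₗ S.σ α⁻¹) LinearMap.id))) ∘ₗ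
            (TensorProduct.assoc K (H α) (H α⁻¹) (H α)).toLinearMap ∘ₗ
            (TensorProduct.map (hH.comul α α⁻¹ (mul_inv_cancel α)) LinearMap.id) ∘ₗ
            hH.comul 1 α (one_mul α)) y)
        = y) := by
  intro α

  -- pointwise instances of the structure axioms
  have cr : ∀ w : C 1, (LinearMap.mul' K (H α)) (TensorProduct.map (G.g α) (G.ginv α α⁻¹ rfl) ((hC.comul α α⁻¹ (mul_inv_cancel α)) w)) = (Algebra.linearMap K (H α)) (hC.counit w) := by
    intro w
    have h := LinearMap.congr_fun (G.conv_right α) w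
    simp only [LinearMap.comp_apply] at h
    exact h
  have cl : ∀ w : C 1, (LinearMap.mul' K (H α)) (TensorProduct.map (G.ginv α α⁻¹ rfl) (G.g α) ((hC.comul α⁻¹ α (inv_mul_cancel α)) w)) = (Algebra.linearMap K (H α)) (hC.counit w) := by
    intro w
    have h := LinearMap.congr_fun (G.conv_left α) w
    simp only [LinearMap.comp_apply] at h
    exact h
  have scaa : ∀ z : H 1, (hC.comul α α⁻¹ (mul_inv_cancel α)) ((S.σ 1) z) = TensorProduct.map (S.σ α) (S.σ α⁻¹) ((hH.comul α α⁻¹ (mul_inv_cancel α)) z) := by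
    intro z
    have h := LinearMap.congr_fun (S.σ_comul α α⁻¹ 1 (mul_inv_cancel α)) z
    simp only [LinearMap.comp_apply] at h
    exact h
  have scia : ∀ z : H 1, (hC.comul α⁻¹ α (inv_mul_cancel α)) ((S.σ 1) z) = TensorProduct.map (S.σ α⁻¹) (S.σ α) ((hH.comul α⁻¹ α (inv_mul_cancel α)) z) := by
    intro z
    have h := LinearMap.congr_fun (S.σ_comul α⁻¹ α 1 (inv_mul_cancel α)) z
    simp only [LinearMap.comp_apply] at h
    exact h
  have sc1a : ∀ x : H α, (hC.comul 1 α (one_mul α)) ((S.σ α) x) = TensorProduct.map (S.σ 1) (S.σ α) ((hH.comul 1 α (one_mul α)) x) := by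
    intro x
    have h := LinearMap.congr_fun (S.σ_comul 1 α α (one_mul α)) x
    simp only [LinearMap.comp_apply] at h
    exact h
  have scnt : ∀ z : H 1, hC.counit ((S.σ 1) z) = hH.counit z := by
    intro z
    have h := LinearMap.congr_fun S.σ_counit z
    simp only [LinearMap.comp_apply] at h
    exact h
  have gsec : ∀ c : C α, TensorProduct.map (S.σ 1) LinearMap.id ((hH.comul 1 α (one_mul α)) ((G.g α) c))
      = TensorProduct.map LinearMap.id (G.g α) ((hC.comul 1 α (one_mul α)) c) := by
    intro c
    have h := LinearMap.congr_fun (G.g_sec α) c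
    simp only [LinearMap.comp_apply] at h
    exact h
  have ccH : ∀ y : H α, (TensorProduct.assoc K (H α) (H α⁻¹) (H α)) (TensorProduct.map (hH.comul α α⁻¹ (mul_inv_cancel α)) LinearMap.id ((hH.comul 1 α (one_mul α)) y))
      = TensorProduct.map LinearMap.id (hH.comul α⁻¹ α (inv_mul_cancel α)) ((hH.comul α 1 (mul_one α)) y) := by
    intro y
    have h := LinearMap.congr_fun
      (hH.toPiCoalg.coassoc' α α⁻¹ α (mul_inv_cancel α) (inv_mul_cancel α) (one_mul α) (mul_one α)) y
    simp only [LinearMap.comp_apply, LinearEquiv.coe_coe] at h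
    exact h
  have ccC : ∀ c : C α, (TensorProduct.assoc K (C α) (C α⁻¹) (C α)) (TensorProduct.map (hC.comul α α⁻¹ (mul_inv_cancel α)) LinearMap.id ((hC.comul 1 α (one_mul α)) c))
      = TensorProduct.map LinearMap.id (hC.comul α⁻¹ α (inv_mul_cancel α)) ((hC.comul α 1 (mul_one α)) c) := by
    intro c
    have h := LinearMap.congr_fun
      (hC.toPiCoalg.coassoc' α α⁻¹ α (mul_inv_cancel α) (inv_mul_cancel α) (one_mul α) (mul_one α)) c
    simp only [LinearMap.comp_apply, LinearEquiv.coe_coe] at h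
    exact h
  have ccH2 : ∀ y : H α, (TensorProduct.assoc K (H 1) (H α) (H 1)) (TensorProduct.map (hH.comul 1 α (one_mul α)) LinearMap.id ((hH.comul α 1 (mul_one α)) y))
      = TensorProduct.map LinearMap.id (hH.comul α 1 (mul_one α)) ((hH.comul 1 α (one_mul α)) y) := by
    intro y
    have h := LinearMap.congr_fun
      (hH.toPiCoalg.coassoc' 1 α 1 (one_mul α) (mul_one α) (mul_one α) (one_mul α)) y
    simp only [LinearMap.comp_apply, LinearEquiv.coe_coe] at h
    exact h
  have ccH3 : ∀ z : H 1, (TensorProduct.assoc K (H α⁻¹) (H α) (H 1)) (TensorProduct.map (hH.comul α⁻¹ α (inv_mul_cancel α)) LinearMap.id ((hH.comul 1 1 (one_mul 1)) z))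
      = TensorProduct.map LinearMap.id (hH.comul α 1 (mul_one α)) ((hH.comul α⁻¹ α (inv_mul_cancel α)) z) := by
    intro z
    have h := LinearMap.congr_fun
      (hH.toPiCoalg.coassoc' α⁻¹ α 1 (inv_mul_cancel α) (mul_one α) (one_mul 1) (inv_mul_cancel α)) z
    simp only [LinearMap.comp_apply, LinearEquiv.coe_coe] at h
    exact h
  have Heps : ∀ y : H α, (TensorProduct.lid K (H α))
      (TensorProduct.map hH.counit LinearMap.id ((hH.comul 1 α (one_mul α)) y)) = y := by
    intro y
    have h := LinearMap.congr_fun (hH.counit_comul α) y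
    simp only [LinearMap.comp_apply, LinearEquiv.coe_coe, LinearMap.id_apply] at h
    exact h
  have Heps1 : ∀ z : H 1, (TensorProduct.lid K (H 1))
      (TensorProduct.map hH.counit LinearMap.id ((hH.comul 1 1 (one_mul 1)) z)) = z := by
    intro z
    have h := LinearMap.congr_fun (hH.counit_comul 1) z
    simp only [LinearMap.comp_apply, LinearEquiv.coe_coe, LinearMap.id_apply] at h
    exact h
  have Ceps : ∀ c : C α, (TensorProduct.rid K (C α))
      (TensorProduct.map LinearMap.id hC.counit ((hC.comul α 1 (mul_one α)) c)) = c := by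
    intro c
    have h := LinearMap.congr_fun (hC.comul_counit α) c
    simp only [LinearMap.comp_apply, LinearEquiv.coe_coe, LinearMap.id_apply] at h
    exact h

  have Lmul : ∀ x y : H α, TensorProduct.map (S.σ 1) LinearMap.id ((hH.comul 1 α (one_mul α)) (x * y))
      = TensorProduct.map (S.σ 1) LinearMap.id ((hH.comul 1 α (one_mul α)) x) * TensorProduct.map (S.σ 1) LinearMap.id ((hH.comul 1 α (one_mul α)) y) := by
    intro x y
    rw [hH.comul_mul 1 α α (one_mul α)]
    exact aux_map_mul (S.σ 1) (S.σ_mul 1) _ _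
  have Lone : TensorProduct.map (S.σ 1) LinearMap.id ((hH.comul 1 α (one_mul α)) (1 : H α)) = 1 := by
    rw [hH.comul_one 1 α α (one_mul α), Algebra.TensorProduct.one_def]
    simp [S.σ_one, Algebra.TensorProduct.one_def]
  have Lalg : ∀ k : K, TensorProduct.map (S.σ 1) LinearMap.id ((hH.comul 1 α (one_mul α)) ((Algebra.linearMap K (H α)) k)) = (Algebra.linearMap K (C 1 ⊗[K] H α)) k := by
    intro k
    have h1 : (Algebra.linearMap K (H α)) k = k • (1 : H α) := by
      simp [Algebra.linearMap_apply, Algebra.algebraMap_eq_smul_one]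
    rw [h1, map_smul, map_smul, Lone]
    simp [Algebra.linearMap_apply, Algebra.algebraMap_eq_smul_one]
  have Lb : ∀ b : (Bsub K (TensorProduct.map (S.σ 1) LinearMap.id ∘ₗ (hH.comul 1 α (one_mul α))) (1 : C 1)), TensorProduct.map (S.σ 1) LinearMap.id ((hH.comul 1 α (one_mul α)) (b : H α))
      = (1 : C 1) ⊗ₜ[K] (b : H α) := by
    intro b
    have hb := LinearMap.mem_ker.mp b.2
    rw [LinearMap.sub_apply, sub_eq_zero] at hb
    simpa only [LinearMap.comp_apply, TensorProduct.mk_apply] using hb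
  have innerm : ((LinearMap.mul' K (H α)) ∘ₗ TensorProduct.map ((G.g α) ∘ₗ (S.σ α)) ((G.ginv α α⁻¹ rfl) ∘ₗ (S.σ α⁻¹))) ∘ₗ (hH.comul α α⁻¹ (mul_inv_cancel α)) = (Algebra.linearMap K (H α)) ∘ₗ hH.counit := by
    apply LinearMap.ext
    intro z
    simp only [LinearMap.comp_apply]
    rw [← aux_mm_gen (G.g α) (S.σ α) (G.ginv α α⁻¹ rfl) (S.σ α⁻¹) ((hH.comul α α⁻¹ (mul_inv_cancel α)) z), ← scaa z, cr ((S.σ 1) z), scnt z]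
  have YidMid : ∀ y : H α, (LinearMap.mul' K (H α)) (TensorProduct.map ((LinearMap.mul' K (H α)) ∘ₗ TensorProduct.map ((G.g α) ∘ₗ (S.σ α)) ((G.ginv α α⁻¹ rfl) ∘ₗ (S.σ α⁻¹)))
      LinearMap.id (TensorProduct.map (hH.comul α α⁻¹ (mul_inv_cancel α)) LinearMap.id ((hH.comul 1 α (one_mul α)) y))) = y := by
    intro y
    rw [aux_mm1, innerm, aux_ms1]
    have h4 := LinearMap.congr_fun (aux_eta (K := K) (A := H α))
      (TensorProduct.map hH.counit LinearMap.id ((hH.comul 1 α (one_mul α)) y))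
    simp only [LinearMap.comp_apply, LinearEquiv.coe_coe] at h4
    rw [h4, Heps y]
  have Yid : ∀ y : H α, (LinearMap.mul' K (H α)) (TensorProduct.map ((G.g α) ∘ₗ (S.σ α)) ((LinearMap.mul' K (H α)) ∘ₗ TensorProduct.map ((G.ginv α α⁻¹ rfl) ∘ₗ (S.σ α⁻¹)) LinearMap.id)
      ((TensorProduct.assoc K (H α) (H α⁻¹) (H α)) (TensorProduct.map (hH.comul α α⁻¹ (mul_inv_cancel α)) LinearMap.id ((hH.comul 1 α (one_mul α)) y)))) = y := by
    intro y
    have h1 := LinearMap.congr_fun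
      (aux_mulassoc (K := K) ((G.g α) ∘ₗ (S.σ α)) ((G.ginv α α⁻¹ rfl) ∘ₗ (S.σ α⁻¹)) (LinearMap.id : H α →ₗ[K] H α))
      (TensorProduct.map (hH.comul α α⁻¹ (mul_inv_cancel α)) LinearMap.id ((hH.comul 1 α (one_mul α)) y))
    simp only [LinearMap.comp_apply, LinearEquiv.coe_coe] at h1
    rw [h1]
    exact YidMid y
  have hfold : (TensorProduct.map LinearMap.id ((G.ginv α α⁻¹ rfl) ∘ₗ (S.σ α⁻¹))) ∘ₗ (TensorProduct.map ((G.g α) ∘ₗ (S.σ α)) LinearMap.id)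
      = TensorProduct.map ((G.g α) ∘ₗ (S.σ α)) ((G.ginv α α⁻¹ rfl) ∘ₗ (S.σ α⁻¹)) := by
    rw [← TensorProduct.map_comp, LinearMap.id_comp, LinearMap.comp_id]
  have Yid2 : ∀ y : H α, (LinearMap.mul' K (H α)) (TensorProduct.map ((G.g α) ∘ₗ (S.σ α)) ((LinearMap.mul' K (H α)) ∘ₗ TensorProduct.map ((G.ginv α α⁻¹ rfl) ∘ₗ (S.σ α⁻¹)) LinearMap.id ∘ₗ (hH.comul α⁻¹ α (inv_mul_cancel α))) ((hH.comul α 1 (mul_one α)) y)) = y := by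
    intro y
    rw [aux_ms2 ((G.g α) ∘ₗ (S.σ α)) (LinearMap.mul' K (H α)) (TensorProduct.map ((G.ginv α α⁻¹ rfl) ∘ₗ (S.σ α⁻¹)) LinearMap.id ∘ₗ (hH.comul α⁻¹ α (inv_mul_cancel α))) ((hH.comul α 1 (mul_one α)) y)]
    rw [aux_ms2 ((G.g α) ∘ₗ (S.σ α)) (TensorProduct.map ((G.ginv α α⁻¹ rfl) ∘ₗ (S.σ α⁻¹)) LinearMap.id) (hH.comul α⁻¹ α (inv_mul_cancel α)) ((hH.comul α 1 (mul_one α)) y)]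
    rw [aux_sw ((G.g α) ∘ₗ (S.σ α)) (hH.comul α⁻¹ α (inv_mul_cancel α)) ((hH.comul α 1 (mul_one α)) y)]
    rw [← ccH y]
    rw [aux_nat1]
    rw [aux_nat2]
    rw [aux_mm_gen]
    rw [LinearMap.id_comp, hfold]
    rw [← aux_mul3]
    rw [aux_mm1 (f2 := (LinearMap.mul' K (H α)))]
    exact YidMid y
  have AinvTL : ∀ y : H α,
      TensorProduct.map (S.σ α) ((LinearMap.mul' K (H α)) ∘ₗ TensorProduct.map ((G.ginv α α⁻¹ rfl) ∘ₗ (S.σ α⁻¹)) LinearMap.id) ((TensorProduct.assoc K (H α) (H α⁻¹) (H α)) (TensorProduct.map (hH.comul α α⁻¹ (mul_inv_cancel α)) LinearMap.id ((hH.comul 1 α (one_mul α)) y)))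
        = TensorProduct.map LinearMap.id ((LinearMap.mul' K (H α)) ∘ₗ TensorProduct.map (G.ginv α α⁻¹ rfl) LinearMap.id)
            ((TensorProduct.assoc K (C α) (C α⁻¹) (H α)) (TensorProduct.map (hC.comul α α⁻¹ (mul_inv_cancel α)) LinearMap.id
              (TensorProduct.map (S.σ 1) LinearMap.id ((hH.comul 1 α (one_mul α)) y)))) := by
    intro y
    rw [aux_ms2 (S.σ α) (LinearMap.mul' K (H α)) (TensorProduct.map ((G.ginv α α⁻¹ rfl) ∘ₗ (S.σ α⁻¹)) LinearMap.id)
      ((TensorProduct.assoc K (H α) (H α⁻¹) (H α)) (TensorProduct.map (hH.comul α α⁻¹ (mul_inv_cancel α)) LinearMap.id ((hH.comul 1 α (one_mul α)) y)))]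
    have hsplit : TensorProduct.map ((G.ginv α α⁻¹ rfl) ∘ₗ (S.σ α⁻¹)) (LinearMap.id (R := K) (M := H α))
        = TensorProduct.map (G.ginv α α⁻¹ rfl) LinearMap.id ∘ₗ TensorProduct.map (S.σ α⁻¹) LinearMap.id := by
      rw [← TensorProduct.map_comp, LinearMap.id_comp]
    rw [hsplit]
    rw [aux_ms2 (S.σ α) (TensorProduct.map (G.ginv α α⁻¹ rfl) LinearMap.id) (TensorProduct.map (S.σ α⁻¹) LinearMap.id)
      ((TensorProduct.assoc K (H α) (H α⁻¹) (H α)) (TensorProduct.map (hH.comul α α⁻¹ (mul_inv_cancel α)) LinearMap.id ((hH.comul 1 α (one_mul α)) y)))]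
    rw [TensorProduct.map_map_assoc]
    rw [aux_mm_gen (TensorProduct.map (S.σ α) (S.σ α⁻¹)) (hH.comul α α⁻¹ (mul_inv_cancel α))]
    rw [LinearMap.id_comp]
    have hsc : TensorProduct.map (S.σ α) (S.σ α⁻¹) ∘ₗ (hH.comul α α⁻¹ (mul_inv_cancel α)) = (hC.comul α α⁻¹ (mul_inv_cancel α)) ∘ₗ (S.σ 1) := by
      apply LinearMap.ext
      intro z
      simp only [LinearMap.comp_apply]
      exact (scaa z).symm
    rw [hsc]
    rw [aux_ms1 (hC.comul α α⁻¹ (mul_inv_cancel α)) (S.σ 1) LinearMap.id]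
    rw [aux_ms2 (LinearMap.id (R := K) (M := C α)) (LinearMap.mul' K (H α)) (TensorProduct.map (G.ginv α α⁻¹ rfl) LinearMap.id)
      ((TensorProduct.assoc K (C α) (C α⁻¹) (H α)) (TensorProduct.map (hC.comul α α⁻¹ (mul_inv_cancel α)) LinearMap.id (TensorProduct.map (S.σ 1) LinearMap.id ((hH.comul 1 α (one_mul α)) y))))]
  have L6 : ∀ (h : H α) (c : C α),
      TensorProduct.map LinearMap.id ((LinearMap.mul' K (H α)) ∘ₗ TensorProduct.map (G.ginv α α⁻¹ rfl) LinearMap.id)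
        ((TensorProduct.assoc K (C α) (C α⁻¹) (H α)) (TensorProduct.map (hC.comul α α⁻¹ (mul_inv_cancel α)) LinearMap.id
          (TensorProduct.map LinearMap.id (LinearMap.mulRight K h ∘ₗ (G.g α)) ((hC.comul 1 α (one_mul α)) c))))
        = c ⊗ₜ[K] h := by
    intro h c
    have inner2 : (((LinearMap.mul' K (H α)) ∘ₗ TensorProduct.map (G.ginv α α⁻¹ rfl) LinearMap.id) ∘ₗ
          TensorProduct.map LinearMap.id (LinearMap.mulRight K h ∘ₗ (G.g α))) ∘ₗ (hC.comul α⁻¹ α (inv_mul_cancel α))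
        = LinearMap.mulRight K h ∘ₗ (Algebra.linearMap K (H α)) ∘ₗ hC.counit := by
      apply LinearMap.ext
      intro z
      simp only [LinearMap.comp_apply]
      rw [aux_mm_gen, LinearMap.comp_id, LinearMap.id_comp]
      rw [aux_mulright (G.ginv α α⁻¹ rfl) (G.g α) h ((hC.comul α⁻¹ α (inv_mul_cancel α)) z)]
      rw [cl z]
    rw [aux_mm_gen (hC.comul α α⁻¹ (mul_inv_cancel α)) LinearMap.id]
    rw [LinearMap.comp_id, LinearMap.id_comp]
    rw [aux_sw' (hC.comul α α⁻¹ (mul_inv_cancel α)) (LinearMap.mulRight K h ∘ₗ (G.g α))]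
    rw [← aux_nat3]
    rw [ccC c]
    rw [aux_mm_gen, aux_mm_gen]
    simp only [LinearMap.id_comp, LinearMap.comp_id]
    rw [inner2]
    rw [aux_L7 hC.counit h ((hC.comul α 1 (mul_one α)) c)]
    rw [Ceps c]
  have main2 : ∀ x : C α ⊗[K] ↥(Bsub K (TensorProduct.map (S.σ 1) LinearMap.id ∘ₗ (hH.comul 1 α (one_mul α))) (1 : C 1)),
      TensorProduct.map (S.σ α) ((LinearMap.mul' K (H α)) ∘ₗ TensorProduct.map ((G.ginv α α⁻¹ rfl) ∘ₗ (S.σ α⁻¹)) LinearMap.id) ((TensorProduct.assoc K (H α) (H α⁻¹) (H α)) (TensorProduct.map (hH.comul α α⁻¹ (mul_inv_cancel α)) LinearMap.id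
        ((hH.comul 1 α (one_mul α)) ((LinearMap.mul' K (H α)) (TensorProduct.map (G.g α) (Submodule.subtype (Bsub K (TensorProduct.map (S.σ 1) LinearMap.id ∘ₗ (hH.comul 1 α (one_mul α))) (1 : C 1))) x)))))
        = TensorProduct.map LinearMap.id (Submodule.subtype (Bsub K (TensorProduct.map (S.σ 1) LinearMap.id ∘ₗ (hH.comul 1 α (one_mul α))) (1 : C 1))) x := by
    intro x
    induction x using TensorProduct.induction_on with
    | zero => simp
    | tmul c b =>
      rw [TensorProduct.map_tmul, LinearMap.mul'_apply]
      simp only [Submodule.subtype_apply]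
      rw [AinvTL]
      rw [Lmul ((G.g α) c) (b : H α)]
      rw [Lb b]
      rw [gsec c]
      rw [aux_L5a (G.g α) (b : H α) ((hC.comul 1 α (one_mul α)) c)]
      rw [L6 (b : H α) c]
      rw [TensorProduct.map_tmul]
      simp only [Submodule.subtype_apply, LinearMap.id_apply]
    | add x1 x2 h1 h2 =>
      simp only [map_add, h1, h2]
  have hmulL : ∀ x y : H α,
      (TensorProduct.map (S.σ 1) LinearMap.id ∘ₗ (hH.comul 1 α (one_mul α))) (x * y)
        = (TensorProduct.map (S.σ 1) LinearMap.id ∘ₗ (hH.comul 1 α (one_mul α))) x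
          * (TensorProduct.map (S.σ 1) LinearMap.id ∘ₗ (hH.comul 1 α (one_mul α))) y := by
    intro x y
    simp only [LinearMap.comp_apply]
    exact Lmul x y
  have E1m : (LinearMap.mul' K (C 1 ⊗[K] H α)) ∘ₗ TensorProduct.map ((TensorProduct.map (S.σ 1) LinearMap.id ∘ₗ (hH.comul 1 α (one_mul α))) ∘ₗ ((G.ginv α α⁻¹ rfl) ∘ₗ (S.σ α⁻¹))) ((TensorProduct.map (S.σ 1) LinearMap.id ∘ₗ (hH.comul 1 α (one_mul α))) ∘ₗ ((G.g α) ∘ₗ (S.σ α))) ∘ₗ (hH.comul α⁻¹ α (inv_mul_cancel α)) = (Algebra.linearMap K (C 1 ⊗[K] H α)) ∘ₗ hH.counit := by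
    apply LinearMap.ext
    intro z
    simp only [LinearMap.comp_apply]
    rw [aux_Lhom (TensorProduct.map (S.σ 1) LinearMap.id ∘ₗ (hH.comul 1 α (one_mul α))) hmulL ((G.ginv α α⁻¹ rfl) ∘ₗ (S.σ α⁻¹)) ((G.g α) ∘ₗ (S.σ α)) ((hH.comul α⁻¹ α (inv_mul_cancel α)) z)]
    rw [← aux_mm_gen (G.ginv α α⁻¹ rfl) (S.σ α⁻¹) (G.g α) (S.σ α) ((hH.comul α⁻¹ α (inv_mul_cancel α)) z)]
    rw [← scia z]
    rw [cl ((S.σ 1) z), scnt z]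
    simp only [LinearMap.comp_apply]
    rw [Lalg]
  have E2m : ((LinearMap.mul' K (C 1 ⊗[K] H α)) ∘ₗ TensorProduct.map ((TensorProduct.map (S.σ 1) LinearMap.id ∘ₗ (hH.comul 1 α (one_mul α))) ∘ₗ ((G.g α) ∘ₗ (S.σ α))) ((TensorProduct.map (S.σ 1) LinearMap.id ∘ₗ (hH.comul 1 α (one_mul α))) ∘ₗ ((LinearMap.mul' K (H α)) ∘ₗ TensorProduct.map ((G.ginv α α⁻¹ rfl) ∘ₗ (S.σ α⁻¹)) LinearMap.id ∘ₗ (hH.comul α⁻¹ α (inv_mul_cancel α))))) ∘ₗ (hH.comul α 1 (mul_one α))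
      = TensorProduct.map (S.σ 1) LinearMap.id ∘ₗ (hH.comul 1 α (one_mul α)) := by
    apply LinearMap.ext
    intro y
    simp only [LinearMap.comp_apply]
    rw [aux_Lhom (TensorProduct.map (S.σ 1) LinearMap.id ∘ₗ (hH.comul 1 α (one_mul α))) hmulL ((G.g α) ∘ₗ (S.σ α)) ((LinearMap.mul' K (H α)) ∘ₗ TensorProduct.map ((G.ginv α α⁻¹ rfl) ∘ₗ (S.σ α⁻¹)) LinearMap.id ∘ₗ (hH.comul α⁻¹ α (inv_mul_cancel α))) ((hH.comul α 1 (mul_one α)) y)]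
    rw [Yid2 y]
    simp only [LinearMap.comp_apply]
  have LGm : (TensorProduct.map (S.σ 1) LinearMap.id ∘ₗ (hH.comul 1 α (one_mul α))) ∘ₗ ((G.g α) ∘ₗ (S.σ α)) = TensorProduct.map (S.σ 1) ((G.g α) ∘ₗ (S.σ α)) ∘ₗ (hH.comul 1 α (one_mul α)) := by
    apply LinearMap.ext
    intro x
    simp only [LinearMap.comp_apply]
    rw [gsec ((S.σ α) x), sc1a x, aux_mm_gen, LinearMap.id_comp]
  have hY2 : (((LinearMap.mul' K (H α)) ∘ₗ TensorProduct.map ((G.g α) ∘ₗ (S.σ α)) LinearMap.id) ∘ₗ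
        TensorProduct.map LinearMap.id ((LinearMap.mul' K (H α)) ∘ₗ TensorProduct.map ((G.ginv α α⁻¹ rfl) ∘ₗ (S.σ α⁻¹)) LinearMap.id ∘ₗ (hH.comul α⁻¹ α (inv_mul_cancel α)))) ∘ₗ (hH.comul α 1 (mul_one α)) = LinearMap.id := by
    apply LinearMap.ext
    intro y'
    simp only [LinearMap.comp_apply, LinearMap.id_apply]
    rw [aux_mm_gen, LinearMap.comp_id, LinearMap.id_comp]
    exact Yid2 y'
  have E3m : ((LinearMap.mul' K (C 1 ⊗[K] H α)) ∘ₗ TensorProduct.map ((TensorProduct.map (S.σ 1) LinearMap.id ∘ₗ (hH.comul 1 α (one_mul α))) ∘ₗ ((G.g α) ∘ₗ (S.σ α))) (((TensorProduct.mk K (C 1) (H α)) 1) ∘ₗ ((LinearMap.mul' K (H α)) ∘ₗ TensorProduct.map ((G.ginv α α⁻¹ rfl) ∘ₗ (S.σ α⁻¹)) LinearMap.id ∘ₗ (hH.comul α⁻¹ α (inv_mul_cancel α))))) ∘ₗ (hH.comul α 1 (mul_one α))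
      = TensorProduct.map (S.σ 1) LinearMap.id ∘ₗ (hH.comul 1 α (one_mul α)) := by
    apply LinearMap.ext
    intro y
    simp only [LinearMap.comp_apply]
    rw [aux_ms2 (f := ((TensorProduct.map (S.σ 1) LinearMap.id ∘ₗ (hH.comul 1 α (one_mul α))) ∘ₗ ((G.g α) ∘ₗ (S.σ α)))) (j2 := ((TensorProduct.mk K (C 1) (H α)) 1))]
    have hG3 := LinearMap.congr_fun (aux_G3 (K := K) (A := C 1) (B := H α))
      (TensorProduct.map ((TensorProduct.map (S.σ 1) LinearMap.id ∘ₗ (hH.comul 1 α (one_mul α))) ∘ₗ ((G.g α) ∘ₗ (S.σ α))) ((LinearMap.mul' K (H α)) ∘ₗ TensorProduct.map ((G.ginv α α⁻¹ rfl) ∘ₗ (S.σ α⁻¹)) LinearMap.id ∘ₗ (hH.comul α⁻¹ α (inv_mul_cancel α))) ((hH.comul α 1 (mul_one α)) y))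
    simp only [LinearMap.comp_apply, LinearEquiv.coe_coe] at hG3
    rw [hG3]
    rw [LGm]
    rw [aux_ms1 (TensorProduct.map (S.σ 1) ((G.g α) ∘ₗ (S.σ α))) (hH.comul 1 α (one_mul α)) ((LinearMap.mul' K (H α)) ∘ₗ TensorProduct.map ((G.ginv α α⁻¹ rfl) ∘ₗ (S.σ α⁻¹)) LinearMap.id ∘ₗ (hH.comul α⁻¹ α (inv_mul_cancel α)))]
    rw [aux_sw' (hH.comul 1 α (one_mul α)) ((LinearMap.mul' K (H α)) ∘ₗ TensorProduct.map ((G.ginv α α⁻¹ rfl) ∘ₗ (S.σ α⁻¹)) LinearMap.id ∘ₗ (hH.comul α⁻¹ α (inv_mul_cancel α)))]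
    rw [show TensorProduct.map (hH.comul 1 α (one_mul α)) LinearMap.id ((hH.comul α 1 (mul_one α)) y)
        = ((TensorProduct.assoc K (H 1) (H α) (H 1))).symm (TensorProduct.map LinearMap.id (hH.comul α 1 (mul_one α)) ((hH.comul 1 α (one_mul α)) y)) from by
      rw [← ccH2 y, LinearEquiv.symm_apply_apply]]
    rw [aux_nat3s]
    rw [TensorProduct.map_map_assoc_symm]
    rw [LinearEquiv.apply_symm_apply]
    rw [aux_mm_gen, aux_mm_gen, aux_mm_gen]
    simp only [LinearMap.id_comp, LinearMap.comp_id]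
    rw [show ((((LinearMap.mul' K (H α)) ∘ₗ TensorProduct.map ((G.g α) ∘ₗ (S.σ α)) LinearMap.id) ∘ₗ
        TensorProduct.map LinearMap.id ((LinearMap.mul' K (H α)) ∘ₗ TensorProduct.map ((G.ginv α α⁻¹ rfl) ∘ₗ (S.σ α⁻¹)) LinearMap.id ∘ₗ (hH.comul α⁻¹ α (inv_mul_cancel α)))) ∘ₗ (hH.comul α 1 (mul_one α))) = LinearMap.id from hY2]
  have E4 : ∀ (F : H 1 →ₗ[K] C 1 ⊗[K] H α) (z : H 1),
      (LinearMap.mul' K (C 1 ⊗[K] H α)) (TensorProduct.map ((Algebra.linearMap K (C 1 ⊗[K] H α)) ∘ₗ hH.counit) F ((hH.comul 1 1 (one_mul 1)) z)) = F z := by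
    intro F z
    rw [aux_ms1 (Algebra.linearMap K (C 1 ⊗[K] H α)) hH.counit F]
    have h4 := LinearMap.congr_fun (aux_eta (K := K) (A := C 1 ⊗[K] H α))
      (TensorProduct.map hH.counit F ((hH.comul 1 1 (one_mul 1)) z))
    simp only [LinearMap.comp_apply, LinearEquiv.coe_coe] at h4
    rw [h4]
    rw [aux_sw' hH.counit F]
    rw [aux_lidnat F]
    rw [Heps1 z]
  have E5 : ∀ (F1 : H α⁻¹ →ₗ[K] C 1 ⊗[K] H α) (F2 : H α →ₗ[K] C 1 ⊗[K] H α)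
      (F3 : H 1 →ₗ[K] C 1 ⊗[K] H α) (z : H 1),
      (LinearMap.mul' K (C 1 ⊗[K] H α)) (TensorProduct.map ((LinearMap.mul' K (C 1 ⊗[K] H α)) ∘ₗ TensorProduct.map F1 F2 ∘ₗ (hH.comul α⁻¹ α (inv_mul_cancel α))) F3 ((hH.comul 1 1 (one_mul 1)) z))
        = (LinearMap.mul' K (C 1 ⊗[K] H α)) (TensorProduct.map F1 (((LinearMap.mul' K (C 1 ⊗[K] H α)) ∘ₗ TensorProduct.map F2 F3) ∘ₗ (hH.comul α 1 (mul_one α))) ((hH.comul α⁻¹ α (inv_mul_cancel α)) z)) := by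
    intro F1 F2 F3 z
    rw [aux_ms1 (f2 := (LinearMap.mul' K (C 1 ⊗[K] H α))) (f1 := TensorProduct.map F1 F2 ∘ₗ (hH.comul α⁻¹ α (inv_mul_cancel α)))]
    rw [aux_ms1 (f2 := TensorProduct.map F1 F2) (f1 := (hH.comul α⁻¹ α (inv_mul_cancel α)))]
    rw [aux_sw' (hH.comul α⁻¹ α (inv_mul_cancel α)) F3]
    rw [show TensorProduct.map (hH.comul α⁻¹ α (inv_mul_cancel α)) LinearMap.id ((hH.comul 1 1 (one_mul 1)) z)
        = ((TensorProduct.assoc K (H α⁻¹) (H α) (H 1))).symm (TensorProduct.map LinearMap.id (hH.comul α 1 (mul_one α)) ((hH.comul α⁻¹ α (inv_mul_cancel α)) z)) from by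
      rw [← ccH3 z, LinearEquiv.symm_apply_apply]]
    rw [aux_nat3s]
    rw [TensorProduct.map_map_assoc_symm]
    rw [aux_mul3]
    rw [LinearEquiv.apply_symm_apply]
    rw [aux_mm_gen, aux_mm_gen, aux_mm_gen]
    simp only [LinearMap.id_comp, LinearMap.comp_id]
    congr 2
    apply LinearMap.ext
    intro w
    have hX : ((((LinearMap.mul' K (C 1 ⊗[K] H α)) ∘ₗ TensorProduct.map F2 LinearMap.id) ∘ₗ TensorProduct.map LinearMap.id F3)
          ∘ₗ (hH.comul α 1 (mul_one α))) = ((LinearMap.mul' K (C 1 ⊗[K] H α)) ∘ₗ TensorProduct.map F2 F3) ∘ₗ (hH.comul α 1 (mul_one α)) := by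
      apply LinearMap.ext
      intro u
      simp only [LinearMap.comp_apply]
      rw [aux_mm_gen, LinearMap.comp_id, LinearMap.id_comp]
    rw [hX]
  have chain : ∀ z : H 1, ((TensorProduct.map (S.σ 1) LinearMap.id ∘ₗ (hH.comul 1 α (one_mul α))) ∘ₗ ((LinearMap.mul' K (H α)) ∘ₗ TensorProduct.map ((G.ginv α α⁻¹ rfl) ∘ₗ (S.σ α⁻¹)) LinearMap.id ∘ₗ (hH.comul α⁻¹ α (inv_mul_cancel α)))) z = (((TensorProduct.mk K (C 1) (H α)) 1) ∘ₗ ((LinearMap.mul' K (H α)) ∘ₗ TensorProduct.map ((G.ginv α α⁻¹ rfl) ∘ₗ (S.σ α⁻¹)) LinearMap.id ∘ₗ (hH.comul α⁻¹ α (inv_mul_cancel α)))) z := by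
    intro z
    calc ((TensorProduct.map (S.σ 1) LinearMap.id ∘ₗ (hH.comul 1 α (one_mul α))) ∘ₗ ((LinearMap.mul' K (H α)) ∘ₗ TensorProduct.map ((G.ginv α α⁻¹ rfl) ∘ₗ (S.σ α⁻¹)) LinearMap.id ∘ₗ (hH.comul α⁻¹ α (inv_mul_cancel α)))) z
        = (LinearMap.mul' K (C 1 ⊗[K] H α)) (TensorProduct.map ((Algebra.linearMap K (C 1 ⊗[K] H α)) ∘ₗ hH.counit) ((TensorProduct.map (S.σ 1) LinearMap.id ∘ₗ (hH.comul 1 α (one_mul α))) ∘ₗ ((LinearMap.mul' K (H α)) ∘ₗ TensorProduct.map ((G.ginv α α⁻¹ rfl) ∘ₗ (S.σ α⁻¹)) LinearMap.id ∘ₗ (hH.comul α⁻¹ α (inv_mul_cancel α)))) ((hH.comul 1 1 (one_mul 1)) z)) :=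
          (E4 ((TensorProduct.map (S.σ 1) LinearMap.id ∘ₗ (hH.comul 1 α (one_mul α))) ∘ₗ ((LinearMap.mul' K (H α)) ∘ₗ TensorProduct.map ((G.ginv α α⁻¹ rfl) ∘ₗ (S.σ α⁻¹)) LinearMap.id ∘ₗ (hH.comul α⁻¹ α (inv_mul_cancel α)))) z).symm
      _ = (LinearMap.mul' K (C 1 ⊗[K] H α)) (TensorProduct.map ((LinearMap.mul' K (C 1 ⊗[K] H α)) ∘ₗ TensorProduct.map ((TensorProduct.map (S.σ 1) LinearMap.id ∘ₗ (hH.comul 1 α (one_mul α))) ∘ₗ ((G.ginv α α⁻¹ rfl) ∘ₗ (S.σ α⁻¹))) ((TensorProduct.map (S.σ 1) LinearMap.id ∘ₗ (hH.comul 1 α (one_mul α))) ∘ₗ ((G.g α) ∘ₗ (S.σ α))) ∘ₗ (hH.comul α⁻¹ α (inv_mul_cancel α)))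
            ((TensorProduct.map (S.σ 1) LinearMap.id ∘ₗ (hH.comul 1 α (one_mul α))) ∘ₗ ((LinearMap.mul' K (H α)) ∘ₗ TensorProduct.map ((G.ginv α α⁻¹ rfl) ∘ₗ (S.σ α⁻¹)) LinearMap.id ∘ₗ (hH.comul α⁻¹ α (inv_mul_cancel α)))) ((hH.comul 1 1 (one_mul 1)) z)) := by rw [E1m]
      _ = (LinearMap.mul' K (C 1 ⊗[K] H α)) (TensorProduct.map ((TensorProduct.map (S.σ 1) LinearMap.id ∘ₗ (hH.comul 1 α (one_mul α))) ∘ₗ ((G.ginv α α⁻¹ rfl) ∘ₗ (S.σ α⁻¹))) (((LinearMap.mul' K (C 1 ⊗[K] H α)) ∘ₗ TensorProduct.map ((TensorProduct.map (S.σ 1) LinearMap.id ∘ₗ (hH.comul 1 α (one_mul α))) ∘ₗ ((G.g α) ∘ₗ (S.σ α))) ((TensorProduct.map (S.σ 1) LinearMap.id ∘ₗ (hH.comul 1 α (one_mul α))) ∘ₗ ((LinearMap.mul' K (H α)) ∘ₗ TensorProduct.map ((G.ginv α α⁻¹ rfl) ∘ₗ (S.σ α⁻¹)) LinearMap.id ∘ₗ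 (hH.comul α⁻¹ α (inv_mul_cancel α)))))
            ∘ₗ (hH.comul α 1 (mul_one α))) ((hH.comul α⁻¹ α (inv_mul_cancel α)) z)) := E5 ((TensorProduct.map (S.σ 1) LinearMap.id ∘ₗ (hH.comul 1 α (one_mul α))) ∘ₗ ((G.ginv α α⁻¹ rfl) ∘ₗ (S.σ α⁻¹))) ((TensorProduct.map (S.σ 1) LinearMap.id ∘ₗ (hH.comul 1 α (one_mul α))) ∘ₗ ((G.g α) ∘ₗ (S.σ α))) ((TensorProduct.map (S.σ 1) LinearMap.id ∘ₗ (hH.comul 1 α (one_mul α))) ∘ₗ ((LinearMap.mul' K (H α)) ∘ₗ TensorProduct.map ((G.ginv α α⁻¹ rfl) ∘ₗ (S.σ α⁻¹)) LinearMap.id ∘ₗ (hH.comul α⁻¹ α (inv_mul_cancel α)))) z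
      _ = (LinearMap.mul' K (C 1 ⊗[K] H α)) (TensorProduct.map ((TensorProduct.map (S.σ 1) LinearMap.id ∘ₗ (hH.comul 1 α (one_mul α))) ∘ₗ ((G.ginv α α⁻¹ rfl) ∘ₗ (S.σ α⁻¹))) (TensorProduct.map (S.σ 1) LinearMap.id ∘ₗ (hH.comul 1 α (one_mul α)))
            ((hH.comul α⁻¹ α (inv_mul_cancel α)) z)) := by rw [E2m]
      _ = (LinearMap.mul' K (C 1 ⊗[K] H α)) (TensorProduct.map ((TensorProduct.map (S.σ 1) LinearMap.id ∘ₗ (hH.comul 1 α (one_mul α))) ∘ₗ ((G.ginv α α⁻¹ rfl) ∘ₗ (S.σ α⁻¹))) (((LinearMap.mul' K (C 1 ⊗[K] H α)) ∘ₗ TensorProduct.map ((TensorProduct.map (S.σ 1) LinearMap.id ∘ₗ (hH.comul 1 α (one_mul α))) ∘ₗ ((G.g α) ∘ₗ (S.σ α))) (((TensorProduct.mk K (C 1) (H α)) 1) ∘ₗ ((LinearMap.mul' K (H α)) ∘ₗ TensorProduct.map ((G.ginv α α⁻¹ rfl) ∘ₗ (S.σ α⁻¹)) LinearMap.id ∘ₗ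 (hH.comul α⁻¹ α (inv_mul_cancel α)))))
            ∘ₗ (hH.comul α 1 (mul_one α))) ((hH.comul α⁻¹ α (inv_mul_cancel α)) z)) := by rw [E3m]
      _ = (LinearMap.mul' K (C 1 ⊗[K] H α)) (TensorProduct.map ((LinearMap.mul' K (C 1 ⊗[K] H α)) ∘ₗ TensorProduct.map ((TensorProduct.map (S.σ 1) LinearMap.id ∘ₗ (hH.comul 1 α (one_mul α))) ∘ₗ ((G.ginv α α⁻¹ rfl) ∘ₗ (S.σ α⁻¹))) ((TensorProduct.map (S.σ 1) LinearMap.id ∘ₗ (hH.comul 1 α (one_mul α))) ∘ₗ ((G.g α) ∘ₗ (S.σ α))) ∘ₗ (hH.comul α⁻¹ α (inv_mul_cancel α)))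
            (((TensorProduct.mk K (C 1) (H α)) 1) ∘ₗ ((LinearMap.mul' K (H α)) ∘ₗ TensorProduct.map ((G.ginv α α⁻¹ rfl) ∘ₗ (S.σ α⁻¹)) LinearMap.id ∘ₗ (hH.comul α⁻¹ α (inv_mul_cancel α)))) ((hH.comul 1 1 (one_mul 1)) z)) := (E5 ((TensorProduct.map (S.σ 1) LinearMap.id ∘ₗ (hH.comul 1 α (one_mul α))) ∘ₗ ((G.ginv α α⁻¹ rfl) ∘ₗ (S.σ α⁻¹))) ((TensorProduct.map (S.σ 1) LinearMap.id ∘ₗ (hH.comul 1 α (one_mul α))) ∘ₗ ((G.g α) ∘ₗ (S.σ α))) (((TensorProduct.mk K (C 1) (H α)) 1) ∘ₗ ((LinearMap.mul' K (H α)) ∘ₗ TensorProduct.map ((G.ginv α α⁻¹ rfl) ∘ₗ (S.σ α⁻¹)) LinearMap.id ∘ₗ (hH.comul α⁻¹ α (inv_mul_cancel α)))) z).symm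
      _ = (LinearMap.mul' K (C 1 ⊗[K] H α)) (TensorProduct.map ((Algebra.linearMap K (C 1 ⊗[K] H α)) ∘ₗ hH.counit) (((TensorProduct.mk K (C 1) (H α)) 1) ∘ₗ ((LinearMap.mul' K (H α)) ∘ₗ TensorProduct.map ((G.ginv α α⁻¹ rfl) ∘ₗ (S.σ α⁻¹)) LinearMap.id ∘ₗ (hH.comul α⁻¹ α (inv_mul_cancel α)))) ((hH.comul 1 1 (one_mul 1)) z)) := by rw [E1m]
      _ = (((TensorProduct.mk K (C 1) (H α)) 1) ∘ₗ ((LinearMap.mul' K (H α)) ∘ₗ TensorProduct.map ((G.ginv α α⁻¹ rfl) ∘ₗ (S.σ α⁻¹)) LinearMap.id ∘ₗ (hH.comul α⁻¹ α (inv_mul_cancel α)))) z := E4 (((TensorProduct.mk K (C 1) (H α)) 1) ∘ₗ ((LinearMap.mul' K (H α)) ∘ₗ TensorProduct.map ((G.ginv α α⁻¹ rfl) ∘ₗ (S.σ α⁻¹)) LinearMap.id ∘ₗ (hH.comul α⁻¹ α (inv_mul_cancel α)))) z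
  have hmemB : ∀ z : H 1, ((LinearMap.mul' K (H α)) ∘ₗ TensorProduct.map ((G.ginv α α⁻¹ rfl) ∘ₗ (S.σ α⁻¹)) LinearMap.id ∘ₗ (hH.comul α⁻¹ α (inv_mul_cancel α))) z ∈ (Bsub K (TensorProduct.map (S.σ 1) LinearMap.id ∘ₗ (hH.comul 1 α (one_mul α))) (1 : C 1)) := by
    intro z
    have hc := chain z
    simp only [LinearMap.comp_apply] at hc
    apply LinearMap.mem_ker.mpr
    rw [LinearMap.sub_apply, sub_eq_zero]
    simp only [LinearMap.comp_apply]
    exact hc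
  refine ⟨⟨?_, ?_⟩, ?_, ?_⟩
  · -- injective
    intro x x' hxx
    have hι : Function.Injective (TensorProduct.map (LinearMap.id : C α →ₗ[K] C α)
        (Submodule.subtype (Bsub K (TensorProduct.map (S.σ 1) LinearMap.id ∘ₗ (hH.comul 1 α (one_mul α))) (1 : C 1)))) :=
      Module.Flat.lTensor_preserves_injective_linearMap _ (Submodule.injective_subtype _)
    apply hι
    rw [← main2 x, ← main2 x']
    simp only [LinearMap.comp_apply] at hxx
    rw [hxx]
  · -- surjective
    intro y
    refine ⟨TensorProduct.map (S.σ α) (LinearMap.codRestrict (Bsub K (TensorProduct.map (S.σ 1) LinearMap.id ∘ₗ (hH.comul 1 α (one_mul α))) (1 : C 1)) ((LinearMap.mul' K (H α)) ∘ₗ TensorProduct.map ((G.ginv α α⁻¹ rfl) ∘ₗ (S.σ α⁻¹)) LinearMap.id ∘ₗ (hH.comul α⁻¹ α (inv_mul_cancel α))) hmemB) ((hH.comul α 1 (mul_one α)) y), ?_⟩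
    simp only [LinearMap.comp_apply]
    rw [aux_mm_gen (G.g α) (S.σ α) (Submodule.subtype (Bsub K (TensorProduct.map (S.σ 1) LinearMap.id ∘ₗ (hH.comul 1 α (one_mul α))) (1 : C 1)))
      (LinearMap.codRestrict (Bsub K (TensorProduct.map (S.σ 1) LinearMap.id ∘ₗ (hH.comul 1 α (one_mul α))) (1 : C 1)) ((LinearMap.mul' K (H α)) ∘ₗ TensorProduct.map ((G.ginv α α⁻¹ rfl) ∘ₗ (S.σ α⁻¹)) LinearMap.id ∘ₗ (hH.comul α⁻¹ α (inv_mul_cancel α))) hmemB) ((hH.comul α 1 (mul_one α)) y)]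
    rw [LinearMap.subtype_comp_codRestrict]
    exact Yid2 y
  · -- stated inverse is a left inverse
    intro x
    simp only [LinearMap.comp_apply, LinearEquiv.coe_coe]
    exact main2 x
  · -- stated inverse is a right inverse
    intro y
    simp only [LinearMap.comp_apply, LinearEquiv.coe_coe]
    rw [aux_mm_gen (G.g α) (S.σ α) LinearMap.id ((LinearMap.mul' K (H α)) ∘ₗ TensorProduct.map ((G.ginv α α⁻¹ rfl) ∘ₗ (S.σ α⁻¹)) LinearMap.id)]
    rw [LinearMap.id_comp]
    exact Yid y
end

section
/- Let H be a finite-dimensional Hopf π-coalgebra and A = {A_α} an isolated subHopf π-coalgebra of H, i.e. there is a family I = {I_α} of Hopf π-coideals with H_α = A_α ⊕ I_α for all α. Then (A, σ), with σ_α : H_α → A_α the projection along I_α, is a left π-coisotropic quantum subgroup of H: A is a π-coalgebra, each A_α is a left H_α-module via Φ_α((m + i) ⊗ a) = m·a (m ∈ A_α, i ∈ I_α, a ∈ A_α), and each σ_α is a surjective left H_α-module map intertwining the comultiplications and counit. -/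
open TensorProduct LinearMap

/-- Let `H` be a finite-dimensional Hopf `π`-coalgebra and
`A` an isolated subHopf `π`-coalgebra, i.e. `H_α = A_α ⊕ J_α` for a family `J`
of Hopf `π`-coideals.  Then `(A, σ)`, with `σ_α` the projection onto `A_α`
along `J_α`, is a left `π`-coisotropic quantum subgroup of `H`: each `A_α` is a
left `H_α`-module via `Φ_α((m+i) ⊗ a) = m·a`, and the `σ_α` are surjective left
`H_α`-module maps intertwining the comultiplications and the counit. -/
theorem isolated_subHopf_coisotropic
    (K : Type*) [Field K] (π : Type*) [Group π]
    (H : π → Type*) [∀ α, Ring (H α)] [∀ α, Algebra K (H α)]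
    [∀ α, FiniteDimensional K (H α)]
    (hH : HopfPiCoalg K π H)
    (A J : ∀ α, Submodule K (H α))
    (hcompl : ∀ α, IsCompl (A α) (J α))
    -- `A` is a subHopf `π`-coalgebra:
    (hA_one : ∀ α, (1 : H α) ∈ A α)
    (hA_mul : ∀ (α : π) (x y : H α), x ∈ A α → y ∈ A α → x * y ∈ A α)
    (hA_comul : ∀ (α β γ : π) (h : α * β = γ), ∀ x ∈ A γ,
      hH.comul α β h x ∈
        LinearMap.range (TensorProduct.map (A α).subtype (A β).subtype))
    (hA_antipode : ∀ (α : π), ∀ x ∈ A α, hH.antipode α α⁻¹ rfl x ∈ A α⁻¹)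
    -- `J` is a family of Hopf `π`-coideals:
    (hJ_ideal_left : ∀ (α : π) (h : H α), ∀ x ∈ J α, h * x ∈ J α)
    (hJ_ideal_right : ∀ (α : π) (h : H α), ∀ x ∈ J α, x * h ∈ J α)
    (hJ_comul : ∀ (α β γ : π) (h : α * β = γ), ∀ x ∈ J γ,
      hH.comul α β h x ∈
        LinearMap.range (TensorProduct.map (J α).subtype
            (LinearMap.id : H β →ₗ[K] H β)) ⊔
          LinearMap.range (TensorProduct.map (LinearMap.id : H α →ₗ[K] H α)
            (J β).subtype))
    (hJ_counit : ∀ x ∈ J 1, hH.counit x = 0)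
    (hJ_antipode : ∀ (α : π), ∀ x ∈ J α, hH.antipode α α⁻¹ rfl x ∈ J α⁻¹) :
    -- each projection `σ_α` is surjective onto `A_α`:
    (∀ α, Function.Surjective
        (Submodule.linearProjOfIsCompl (A α) (J α) (hcompl α))) ∧
    -- `σ_α` is multiplicative into `A` (equivalently, a left `H_α`-module map
    -- for the action `Φ_α(h ⊗ a) = σ_α(h)·a`):
    (∀ (α : π) (h k : H α),
        ((Submodule.linearProjOfIsCompl (A α) (J α) (hcompl α)) (h * k) : H α)
          = ((Submodule.linearProjOfIsCompl (A α) (J α) (hcompl α)) h : H α) *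
            ((Submodule.linearProjOfIsCompl (A α) (J α) (hcompl α)) k : H α)) ∧
    (∀ α, ((Submodule.linearProjOfIsCompl (A α) (J α) (hcompl α)) (1 : H α) : H α)
        = 1) ∧
    -- the action `Φ_α` lands in `A_α`:
    (∀ (α : π) (h : H α), ∀ a ∈ A α,
        ((Submodule.linearProjOfIsCompl (A α) (J α) (hcompl α)) h : H α) * a ∈ A α) ∧
    -- `σ` intertwines the comultiplications:
    (∀ (α β γ : π) (h : α * β = γ),
        (TensorProduct.map (A α).subtype (A β).subtype) ∘ₗ
            (TensorProduct.map
              (Submodule.linearProjOfIsCompl (A α) (J α) (hcompl α))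
              (Submodule.linearProjOfIsCompl (A β) (J β) (hcompl β))) ∘ₗ
            hH.comul α β h
          = hH.comul α β h ∘ₗ (A γ).subtype ∘ₗ
              (Submodule.linearProjOfIsCompl (A γ) (J γ) (hcompl γ))) ∧
    -- `σ` intertwines the counits:
    (hH.counit ∘ₗ (A 1).subtype ∘ₗ
        (Submodule.linearProjOfIsCompl (A 1) (J 1) (hcompl 1))
      = hH.counit) := by
    classical
  have hPA : ∀ (α : π) (x : H α), x ∈ A α →
      ((Submodule.linearProjOfIsCompl (A α) (J α) (hcompl α)) x : H α) = x := by
    intro α x hx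
    have h1 := Submodule.linearProjOfIsCompl_apply_left (hcompl α) ⟨x, hx⟩
    exact congrArg Subtype.val h1
  have hPJ : ∀ (α : π) (x : H α), x ∈ J α →
      (Submodule.linearProjOfIsCompl (A α) (J α) (hcompl α)) x = 0 := by
    intro α x hx
    exact Submodule.linearProjOfIsCompl_apply_right' (hcompl α) hx
  have hdec : ∀ (α : π) (x : H α), ∃ j ∈ J α,
      x = ((Submodule.linearProjOfIsCompl (A α) (J α) (hcompl α)) x : H α) + j := by
    intro α x
    refine ⟨((Submodule.linearProjOfIsCompl (J α) (A α) (hcompl α).symm) x : H α),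
      Submodule.coe_mem _, ?_⟩
    exact (Submodule.projection_add_projection_eq_self (hcompl α) x).symm
  have hsurj : ∀ α, Function.Surjective
      (Submodule.linearProjOfIsCompl (A α) (J α) (hcompl α)) := by
    intro α a
    refine ⟨(a : H α), ?_⟩
    apply Subtype.ext
    exact hPA α a a.2
  have hmul : ∀ (α : π) (h k : H α),
      ((Submodule.linearProjOfIsCompl (A α) (J α) (hcompl α)) (h * k) : H α)
        = ((Submodule.linearProjOfIsCompl (A α) (J α) (hcompl α)) h : H α) *
          ((Submodule.linearProjOfIsCompl (A α) (J α) (hcompl α)) k : H α) := by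
    intro α h k
    obtain ⟨i, hi, hh⟩ := hdec α h
    obtain ⟨j, hj, hk⟩ := hdec α k
    set P := Submodule.linearProjOfIsCompl (A α) (J α) (hcompl α)
    have hexp : h * k = (P h : H α) * (P k : H α)
        + ((P h : H α) * j + (i * (P k : H α) + i * j)) := by
      conv_lhs => rw [hh, hk]
      noncomm_ring
    have hmem : (P h : H α) * j + (i * (P k : H α) + i * j) ∈ J α := by
      exact (J α).add_mem (hJ_ideal_left α _ _ hj)
        ((J α).add_mem (hJ_ideal_right α _ _ hi) (hJ_ideal_right α _ _ hi))
    have hPhk : (P h : H α) * (P k : H α) ∈ A α :=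
      hA_mul α _ _ (Submodule.coe_mem _) (Submodule.coe_mem _)
    calc (P (h * k) : H α)
        = (P ((P h : H α) * (P k : H α)) : H α)
          + (P ((P h : H α) * j + (i * (P k : H α) + i * j)) : H α) := by
          rw [← Submodule.coe_add, ← map_add, ← hexp]
      _ = (P h : H α) * (P k : H α) := by
          rw [hPJ α _ hmem, hPA α _ hPhk]; simp
  have hone : ∀ α,
      ((Submodule.linearProjOfIsCompl (A α) (J α) (hcompl α)) (1 : H α) : H α) = 1 :=
    fun α => hPA α 1 (hA_one α)
  have hPsubJ : ∀ (α : π),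
      (Submodule.linearProjOfIsCompl (A α) (J α) (hcompl α)) ∘ₗ (J α).subtype = 0 := by
    intro α
    ext j
    simp [hPJ α j j.2]
  refine ⟨hsurj, hmul, hone, ?_, ?_, ?_⟩
  · intro α h a ha
    exact hA_mul α _ _ (Submodule.coe_mem _) ha
  · intro α β γ hg
    ext x
    set Pα := Submodule.linearProjOfIsCompl (A α) (J α) (hcompl α)
    set Pβ := Submodule.linearProjOfIsCompl (A β) (J β) (hcompl β)
    set Pγ := Submodule.linearProjOfIsCompl (A γ) (J γ) (hcompl γ)
    obtain ⟨j, hj, hx⟩ := hdec γ x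
    simp only [LinearMap.comp_apply, Submodule.subtype_apply]
    have hsplit : hH.comul α β hg x
        = hH.comul α β hg ((Pγ x : H γ)) + hH.comul α β hg j := by
      rw [← map_add, ← hx]
    -- the A-part is fixed by (ι ∘ P) ⊗ (ι ∘ P)
    obtain ⟨t, ht⟩ := hA_comul α β γ hg (Pγ x : H γ) (Submodule.coe_mem _)
    have hcomp : (TensorProduct.map (A α).subtype (A β).subtype) ∘ₗ
        (TensorProduct.map Pα Pβ) ∘ₗ (TensorProduct.map (A α).subtype (A β).subtype)
        = TensorProduct.map (A α).subtype (A β).subtype := by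
      rw [← TensorProduct.map_comp, ← TensorProduct.map_comp]
      congr 1 <;> · ext a; exact hPA _ _ a.2
    have hAfix : (TensorProduct.map (A α).subtype (A β).subtype)
        ((TensorProduct.map Pα Pβ) (hH.comul α β hg (Pγ x : H γ)))
        = hH.comul α β hg (Pγ x : H γ) := by
      rw [← ht]
      exact LinearMap.congr_fun hcomp t
    -- the J-part is killed by P ⊗ P
    have hJkill : (TensorProduct.map Pα Pβ) (hH.comul α β hg j) = 0 := by
      have hm := hJ_comul α β γ hg j hj
      rw [Submodule.mem_sup] at hm
      obtain ⟨y, hy, z, hz, hyz⟩ := hm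
      obtain ⟨u, hu⟩ := hy
      obtain ⟨v, hv⟩ := hz
      have h1 : (TensorProduct.map Pα Pβ) ∘ₗ
          (TensorProduct.map (J α).subtype (LinearMap.id : H β →ₗ[K] H β)) = 0 := by
        rw [← TensorProduct.map_comp, hPsubJ α]
        exact TensorProduct.map_zero_left _
      have h2 : (TensorProduct.map Pα Pβ) ∘ₗ
          (TensorProduct.map (LinearMap.id : H α →ₗ[K] H α) (J β).subtype) = 0 := by
        rw [← TensorProduct.map_comp, hPsubJ β]
        exact TensorProduct.map_zero_right _
      rw [← hyz, map_add, ← hu, ← hv]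
      rw [show (TensorProduct.map Pα Pβ)
            ((TensorProduct.map (J α).subtype (LinearMap.id : H β →ₗ[K] H β)) u) = 0
          from LinearMap.congr_fun h1 u,
        show (TensorProduct.map Pα Pβ)
            ((TensorProduct.map (LinearMap.id : H α →ₗ[K] H α) (J β).subtype) v) = 0
          from LinearMap.congr_fun h2 v, add_zero]
    rw [hsplit, map_add, hJkill, add_zero]
    exact hAfix
  · ext x
    obtain ⟨j, hj, hx⟩ := hdec 1 x
    simp only [LinearMap.comp_apply, Submodule.subtype_apply]
    conv_rhs => rw [hx]
    rw [map_add, hJ_counit j hj, add_zero]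
end

section
/- Let H be a Hopf π-coalgebra and (C, σ) a left π-coisotropic quantum subgroup. Suppose (V, ρ) and (W, ψ) are right π-comodules over C and F_1 : V_1 → W_1 is a vector space isomorphism with ψ_{1,1} F_1 = (F_1 ⊗ I_1) ρ_{1,1}. Then the maps F̄_α = F_1 ⊗ I_α restrict to isomorphisms Ind(ρ)_α → Ind(ψ)_α and intertwine the coactions I ⊗ Δ^H_{α,β}; hence Ind(ρ) and Ind(ψ) are equivalent right π-comodules over H. -/
open TensorProduct LinearMap

private lemma ind_key {K : Type*} [Field K] {V1 W1 C1 Hα : Type*}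
    [AddCommGroup V1] [Module K V1] [AddCommGroup W1] [Module K W1]
    [AddCommGroup C1] [Module K C1] [AddCommGroup Hα] [Module K Hα]
    (L : Hα →ₗ[K] C1 ⊗[K] Hα)
    (ρ11 : V1 →ₗ[K] V1 ⊗[K] C1) (ψ11 : W1 →ₗ[K] W1 ⊗[K] C1)
    (F : V1 →ₗ[K] W1)
    (hF : ψ11 ∘ₗ F = (TensorProduct.map F LinearMap.id) ∘ₗ ρ11) :
    (TensorProduct.map LinearMap.id L -
        (TensorProduct.assoc K W1 C1 Hα).toLinearMap ∘ₗ
          TensorProduct.map ψ11 LinearMap.id) ∘ₗ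
        TensorProduct.map F (LinearMap.id : Hα →ₗ[K] Hα)
      = TensorProduct.map F (LinearMap.id : C1 ⊗[K] Hα →ₗ[K] C1 ⊗[K] Hα) ∘ₗ
          (TensorProduct.map LinearMap.id L -
            (TensorProduct.assoc K V1 C1 Hα).toLinearMap ∘ₗ
              TensorProduct.map ρ11 LinearMap.id) := by
  apply TensorProduct.ext'
  intro v h
  have hFv : ψ11 (F v) = TensorProduct.map F LinearMap.id (ρ11 v) :=
    DFunLike.congr_fun hF v
  have hassoc := TensorProduct.map_map_assoc (R := K) F
    (LinearMap.id : C1 →ₗ[K] C1) (LinearMap.id : Hα →ₗ[K] Hα) ((ρ11 v) ⊗ₜ[K] h)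
  simp only [LinearMap.comp_apply, LinearMap.sub_apply, TensorProduct.map_tmul,
    LinearMap.id_coe, id_eq, map_sub, hFv]
  congr 1
  simpa using hassoc.symm

/-- Let `(C, σ)` be a left `π`-coisotropic quantum subgroup
of `H`, and `(V, ρ)`, `(W, ψ)` right `π`-comodules over `C`.  If
`F₁ : V_1 ≃ W_1` satisfies `ψ_{1,1} F₁ = (F₁ ⊗ I) ρ_{1,1}`, then the maps
`F̄_α = F₁ ⊗ I_α` restrict to isomorphisms `Ind(ρ)_α → Ind(ψ)_α` intertwining
the coactions `I ⊗ Δ^H`; hence `Ind(ρ)` and `Ind(ψ)` are equivalent right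
`π`-comodules over `H`. -/
theorem ind_equivalence
    (K : Type*) [Field K] (π : Type*) [Group π]
    (H : π → Type*) [∀ α, Ring (H α)] [∀ α, Algebra K (H α)]
    (C : π → Type*) [∀ α, AddCommGroup (C α)] [∀ α, Module K (C α)]
    (V : π → Type*) [∀ α, AddCommGroup (V α)] [∀ α, Module K (V α)]
    (W : π → Type*) [∀ α, AddCommGroup (W α)] [∀ α, Module K (W α)]
    (hH : HopfPiCoalg K π H) (hC : PiCoalg K π C)
    (co : Coisotropic K π H C hH hC)
    (ρ : PiComodule K π C V hC) (ψ : PiComodule K π C W hC)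
    (F1 : V 1 ≃ₗ[K] W 1)
    (hF1 : ψ.coact 1 1 (mul_one 1) ∘ₗ F1.toLinearMap
      = (TensorProduct.map F1.toLinearMap LinearMap.id) ∘ₗ ρ.coact 1 1 (mul_one 1)) :
    -- `F̄_α` maps `Ind(ρ)_α` into `Ind(ψ)_α`:
    (∀ (α : π), ∀ x ∈ IndSub K ((TensorProduct.map (co.σ 1) LinearMap.id) ∘ₗ
          hH.comul 1 α (one_mul α)) (ρ.coact 1 1 (mul_one 1)),
        (TensorProduct.map F1.toLinearMap (LinearMap.id : H α →ₗ[K] H α)) x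
          ∈ IndSub K ((TensorProduct.map (co.σ 1) LinearMap.id) ∘ₗ
              hH.comul 1 α (one_mul α)) (ψ.coact 1 1 (mul_one 1))) ∧
    -- bijectively so:
    (∀ (α : π),
        Function.Injective
          (TensorProduct.map F1.toLinearMap (LinearMap.id : H α →ₗ[K] H α))) ∧
    (∀ (α : π), ∀ y ∈ IndSub K ((TensorProduct.map (co.σ 1) LinearMap.id) ∘ₗ
          hH.comul 1 α (one_mul α)) (ψ.coact 1 1 (mul_one 1)),
        ∃ x ∈ IndSub K ((TensorProduct.map (co.σ 1) LinearMap.id) ∘ₗ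
            hH.comul 1 α (one_mul α)) (ρ.coact 1 1 (mul_one 1)),
          (TensorProduct.map F1.toLinearMap (LinearMap.id : H α →ₗ[K] H α)) x = y) ∧
    -- `F̄` intertwines the coactions `I ⊗ Δ^H`:
    (∀ (α β γ : π) (h : α * β = γ),
        (TensorProduct.map F1.toLinearMap
            (LinearMap.id : H α ⊗[K] H β →ₗ[K] H α ⊗[K] H β)) ∘ₗ
          (TensorProduct.map (LinearMap.id : V 1 →ₗ[K] V 1) (hH.comul α β h))
        = (TensorProduct.map (LinearMap.id : W 1 →ₗ[K] W 1) (hH.comul α β h)) ∘ₗ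
            (TensorProduct.map F1.toLinearMap (LinearMap.id : H γ →ₗ[K] H γ))) := by
  have hF1' : ρ.coact 1 1 (mul_one 1) ∘ₗ F1.symm.toLinearMap
      = (TensorProduct.map F1.symm.toLinearMap LinearMap.id) ∘ₗ ψ.coact 1 1 (mul_one 1) := by
    ext w
    have h0 := DFunLike.congr_fun hF1 (F1.symm w)
    simp only [LinearMap.comp_apply, LinearEquiv.coe_coe, LinearEquiv.apply_symm_apply] at h0 ⊢
    rw [h0, ← LinearMap.comp_apply, ← TensorProduct.map_comp]
    simp
  refine ⟨?_, ?_, ?_, ?_⟩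
  · intro α x hx
    have hk := ind_key ((TensorProduct.map (co.σ 1) LinearMap.id) ∘ₗ
        hH.comul 1 α (one_mul α)) (ρ.coact 1 1 (mul_one 1)) (ψ.coact 1 1 (mul_one 1))
      F1.toLinearMap hF1
    have := congrArg (fun f => f x) hk
    simp only [IndSub, LinearMap.mem_ker] at hx ⊢
    simpa [hx] using this
  · intro α a b hab
    have h2 := congrArg
      (TensorProduct.map F1.symm.toLinearMap (LinearMap.id : H α →ₗ[K] H α)) hab
    rw [← LinearMap.comp_apply, ← LinearMap.comp_apply,
      ← TensorProduct.map_comp] at h2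
    simpa using h2
  · intro α y hy
    refine ⟨TensorProduct.map F1.symm.toLinearMap (LinearMap.id : H α →ₗ[K] H α) y,
      ?_, ?_⟩
    · have hk := ind_key ((TensorProduct.map (co.σ 1) LinearMap.id) ∘ₗ
          hH.comul 1 α (one_mul α)) (ψ.coact 1 1 (mul_one 1)) (ρ.coact 1 1 (mul_one 1))
        F1.symm.toLinearMap hF1'
      have := congrArg (fun f => f y) hk
      simp only [IndSub, LinearMap.mem_ker] at hy ⊢
      simpa [hy] using this
    · rw [← LinearMap.comp_apply, ← TensorProduct.map_comp]
      simp
  · intro α β γ h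
    rw [← TensorProduct.map_comp, ← TensorProduct.map_comp]
    simp
end
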